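/- Suppose ≽ satisfies A1 (weak order), weak separability (A2), A3, and closedness, and suppose V₁ : X₁ → ℝ and V₂ : X₂ → ℝ additively represent ≽ on SE(z) for every z ∈ Θ \ SE_ext. Then (V₁,V₂) additively represents ≽ on the whole set ⋃_{z ∈ Θ \ SE_ext} SE(z), i.e. for all x,y in this union: x ≽ y iff V₁(x₁) + V₂(x₂) ≥ V₁(y₁) + V₂(y₂). -/

import Mathlib

open Set
open scoped Classical

section ChoquetAxioms

variable {X₁ X₂ : Type*}

/-- Asymmetric (strict) part of a relation. -/
def SP (R : X₁ × X₂ → X₁ × X₂ → Prop) (x y : X₁ × X₂) : Prop := R x y ∧ ¬ R y x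

/-- Symmetric (indifference) part of a relation. -/
def IP (R : X₁ × X₂ → X₁ × X₂ → Prop) (x y : X₁ × X₂) : Prop := R x y ∧ R y x

/-- Triple cancellation on a set `A`. -/
def TCancel (R : X₁ × X₂ → X₁ × X₂ → Prop) (A : Set (X₁ × X₂)) : Prop :=
  ∀ a b c d : X₁, ∀ p q r s : X₂,
    (a,p) ∈ A → (b,q) ∈ A → (a,r) ∈ A → (b,s) ∈ A →
    (c,p) ∈ A → (d,q) ∈ A → (c,r) ∈ A → (d,s) ∈ A →
    R (b,q) (a,p) → R (a,r) (b,s) → R (c,p) (d,q) → R (c,r) (d,s)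

/-- A1: weak order (complete and transitive). -/
def A1 (R : X₁ × X₂ → X₁ × X₂ → Prop) : Prop :=
  (∀ x y, R x y ∨ R y x) ∧ (∀ x y z, R x y → R y z → R x z)

/-- A2: weak separability. -/
def A2 (R : X₁ × X₂ → X₁ × X₂ → Prop) : Prop :=
  (∀ a b : X₁, ∀ p : X₂, SP R (a,p) (b,p) → ∀ q : X₂, R (a,q) (b,q)) ∧
  (∀ p q : X₂, ∀ a : X₁, SP R (a,p) (a,q) → ∀ b : X₁, R (b,p) (b,q))

/-- Induced order on the first coordinate. -/
def Ge1 (R : X₁ × X₂ → X₁ × X₂ → Prop) (a b : X₁) : Prop := ∀ p : X₂, R (a,p) (b,p)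

/-- Induced order on the second coordinate. -/
def Ge2 (R : X₁ × X₂ → X₁ × X₂ → Prop) (p q : X₂) : Prop := ∀ a : X₁, R (a,p) (a,q)

def Max1 (R : X₁ × X₂ → X₁ × X₂ → Prop) (a : X₁) : Prop := ∀ b : X₁, Ge1 R a b
def Min1 (R : X₁ × X₂ → X₁ × X₂ → Prop) (a : X₁) : Prop := ∀ b : X₁, Ge1 R b a
def Max2 (R : X₁ × X₂ → X₁ × X₂ → Prop) (p : X₂) : Prop := ∀ q : X₂, Ge2 R p q
def Min2 (R : X₁ × X₂ → X₁ × X₂ → Prop) (p : X₂) : Prop := ∀ q : X₂, Ge2 R q p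

/-- The south-east rectangular cone at `z`. -/
def SEz (R : X₁ × X₂ → X₁ × X₂ → Prop) (z : X₁ × X₂) : Set (X₁ × X₂) :=
  {x | Ge1 R x.1 z.1 ∧ Ge2 R z.2 x.2}

/-- The north-west rectangular cone at `z`. -/
def NWz (R : X₁ × X₂ → X₁ × X₂ → Prop) (z : X₁ × X₂) : Set (X₁ × X₂) :=
  {x | Ge2 R x.2 z.2 ∧ Ge1 R z.1 x.1}

/-- A3: at every point, triple cancellation holds on `SEz z` or on `NWz z`. -/
def A3 (R : X₁ × X₂ → X₁ × X₂ → Prop) : Prop :=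
  ∀ z : X₁ × X₂, TCancel R (SEz R z) ∨ TCancel R (NWz R z)

/-- The region SE. -/
def SEreg (R : X₁ × X₂ → X₁ × X₂ → Prop) : Set (X₁ × X₂) :=
  {x | (∃ z : X₁ × X₂, ¬ Max1 R z.1 ∧ ¬ Min2 R z.2 ∧ TCancel R (SEz R z) ∧ x ∈ SEz R z) ∨
       ((Max1 R x.1 ∨ Min2 R x.2) ∧ ∀ y ∈ SEz R x, y ≠ x → ¬ TCancel R (NWz R y))}

/-- The region NW. -/
def NWreg (R : X₁ × X₂ → X₁ × X₂ → Prop) : Set (X₁ × X₂) :=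
  {x | (∃ z : X₁ × X₂, ¬ Min1 R z.1 ∧ ¬ Max2 R z.2 ∧ TCancel R (NWz R z) ∧ x ∈ NWz R z) ∨
       ((Min1 R x.1 ∨ Max2 R x.2) ∧ ∀ y ∈ NWz R x, y ≠ x → ¬ TCancel R (SEz R y))}

/-- Θ = SE ∩ NW. -/
def Theta (R : X₁ × X₂ → X₁ × X₂ → Prop) : Set (X₁ × X₂) := SEreg R ∩ NWreg R

/-- Extreme points of SE. -/
def SEext (R : X₁ × X₂ → X₁ × X₂ → Prop) : Set (X₁ × X₂) :=
  {x | x ∈ Theta R ∧ (Min2 R x.2 ∨ Max1 R x.1)}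

/-- Extreme points of NW. -/
def NWext (R : X₁ × X₂ → X₁ × X₂ → Prop) : Set (X₁ × X₂) :=
  {x | x ∈ Theta R ∧ (Min1 R x.1 ∨ Max2 R x.2)}

/-- Coordinate 1 is essential on `A`. -/
def Ess1 (R : X₁ × X₂ → X₁ × X₂ → Prop) (A : Set (X₁ × X₂)) : Prop :=
  ∃ a b : X₁, ∃ p : X₂, (a,p) ∈ A ∧ (b,p) ∈ A ∧ SP R (a,p) (b,p)

/-- Coordinate 2 is essential on `A`. -/
def Ess2 (R : X₁ × X₂ → X₁ × X₂ → Prop) (A : Set (X₁ × X₂)) : Prop :=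
  ∃ p q : X₂, ∃ a : X₁, (a,p) ∈ A ∧ (a,q) ∈ A ∧ SP R (a,p) (a,q)

/-- Four points all belonging to a set. -/
def In4 (A : Set (X₁ × X₂)) (w x y z : X₁ × X₂) : Prop :=
  w ∈ A ∧ x ∈ A ∧ y ∈ A ∧ z ∈ A

/-- A4. -/
def A4 (R : X₁ × X₂ → X₁ × X₂ → Prop) : Prop :=
  ∀ a b c d : X₁, ∀ p q r s : X₂,
    ((In4 (NWreg R) (a,p) (b,q) (a,r) (b,s) ∧ In4 (NWreg R) (c,p) (d,q) (c,r) (d,s)) ∨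
     (In4 (SEreg R) (a,p) (b,q) (a,r) (b,s) ∧ In4 (SEreg R) (c,p) (d,q) (c,r) (d,s)) ∨
     (In4 (NWreg R) (a,p) (b,q) (a,r) (b,s) ∧ Ess2 R (NWreg R) ∧
        In4 (SEreg R) (c,p) (d,q) (c,r) (d,s)) ∨
     (In4 (SEreg R) (a,p) (b,q) (a,r) (b,s) ∧ Ess2 R (SEreg R) ∧
        In4 (NWreg R) (c,p) (d,q) (c,r) (d,s)) ∨
     (In4 (NWreg R) (a,p) (b,q) (c,p) (d,q) ∧ Ess1 R (NWreg R) ∧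
        In4 (SEreg R) (a,r) (b,s) (c,r) (d,s)) ∨
     (In4 (SEreg R) (a,p) (b,q) (c,p) (d,q) ∧ Ess1 R (SEreg R) ∧
        In4 (NWreg R) (a,r) (b,s) (c,r) (d,s))) →
    R (b,q) (a,p) → R (a,r) (b,s) → R (c,p) (d,q) → R (c,r) (d,s)

/-- One half of A5 (stated for the given coordinate order). -/
def A5half (R : X₁ × X₂ → X₁ × X₂ → Prop) : Prop :=
  ∀ a b c d e g x₀ x₁ : X₁, ∀ p q y₀ y₁ πa πb πc πd : X₂,
    ((In4 (NWreg R) (a,p) (b,q) (c,p) (d,q) ∧ Ess1 R (NWreg R)) ∨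
     (In4 (SEreg R) (a,p) (b,q) (c,p) (d,q) ∧ Ess1 R (SEreg R))) →
    (In4 (NWreg R) (a,y₀) (b,y₀) (c,y₁) (d,y₁) ∨
     In4 (SEreg R) (a,y₀) (b,y₀) (c,y₁) (d,y₁)) →
    ((In4 (NWreg R) (x₀,πa) (x₀,πb) (x₁,πc) (x₁,πd) ∧ Ess2 R (NWreg R)) ∨
     (In4 (SEreg R) (x₀,πa) (x₀,πb) (x₁,πc) (x₁,πd) ∧ Ess2 R (SEreg R))) →
    (In4 (NWreg R) (e,πa) (g,πb) (e,πc) (g,πd) ∨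
     In4 (SEreg R) (e,πa) (g,πb) (e,πc) (g,πd)) →
    R (b,q) (a,p) → R (c,p) (d,q) →
    IP R (a,y₀) (x₀,πa) → IP R (b,y₀) (x₀,πb) →
    IP R (c,y₁) (x₁,πc) → IP R (d,y₁) (x₁,πd) →
    R (e,πa) (g,πb) → R (e,πc) (g,πd)

/-- The relation with the roles of the two coordinates exchanged. -/
def swapRel (R : X₁ × X₂ → X₁ × X₂ → Prop) : X₂ × X₁ → X₂ × X₁ → Prop :=
  fun x y => R (x.2, x.1) (y.2, y.1)

/-- A5 : the condition together with its symmetric (coordinate-exchanged) version. -/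
def A5 (R : X₁ × X₂ → X₁ × X₂ → Prop) : Prop :=
  A5half R ∧ A5half (swapRel R)

/-- A6 : bi-independence. -/
def A6 (R : X₁ × X₂ → X₁ × X₂ → Prop) : Prop :=
  (∀ a b c d : X₁, ∀ p : X₂,
    (In4 (SEreg R) (a,p) (b,p) (c,p) (d,p) ∨ In4 (NWreg R) (a,p) (b,p) (c,p) (d,p)) →
    SP R (a,p) (b,p) → (∃ q : X₂, SP R (c,q) (d,q)) → SP R (c,p) (d,p)) ∧
  (∀ p q r s : X₂, ∀ a : X₁,
    (In4 (SEreg R) (a,p) (a,q) (a,r) (a,s) ∨ In4 (NWreg R) (a,p) (a,q) (a,r) (a,s)) →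
    SP R (a,p) (a,q) → (∃ b : X₁, SP R (b,r) (b,s)) → SP R (a,r) (a,s))

/-- A7 : both coordinates are essential on X. -/
def A7 (R : X₁ × X₂ → X₁ × X₂ → Prop) : Prop :=
  Ess1 R Set.univ ∧ Ess2 R Set.univ

/-- A8 : restricted solvability. -/
def A8 (R : X₁ × X₂ → X₁ × X₂ → Prop) : Prop :=
  (∀ a : X₁, ∀ p r : X₂, ∀ y : X₁ × X₂,
    R (a,p) y → R y (a,r) → ∃ b : X₂, IP R (a,b) y) ∧
  (∀ p : X₂, ∀ a c : X₁, ∀ y : X₁ × X₂,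
    R (a,p) y → R y (c,p) → ∃ b : X₁, IP R (b,p) y)

/-- `S` is an interval of integers. -/
def IsIntervalZ (S : Set ℤ) : Prop :=
  ∀ i j k : ℤ, i ≤ j → j ≤ k → i ∈ S → k ∈ S → j ∈ S

/-- Standard sequence on X₁. -/
def StdSeq1 (R : X₁ × X₂ → X₁ × X₂ → Prop) (S : Set ℤ) (g : ℤ → X₁) (y₀ y₁ : X₂) : Prop :=
  IsIntervalZ S ∧ ¬ (Ge2 R y₀ y₁ ∧ Ge2 R y₁ y₀) ∧
  ∀ i, i ∈ S → (i+1) ∈ S → IP R (g i, y₀) (g (i+1), y₁)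

def BoundedSeq1 (R : X₁ × X₂ → X₁ × X₂ → Prop) (S : Set ℤ) (g : ℤ → X₁) (y₀ : X₂) : Prop :=
  ∃ u v : X₁ × X₂, ∀ i ∈ S, R u (g i, y₀) ∧ R (g i, y₀) v

/-- Standard sequence on X₂. -/
def StdSeq2 (R : X₁ × X₂ → X₁ × X₂ → Prop) (S : Set ℤ) (h : ℤ → X₂) (x₀ x₁ : X₁) : Prop :=
  IsIntervalZ S ∧ ¬ (Ge1 R x₀ x₁ ∧ Ge1 R x₁ x₀) ∧
  ∀ i, i ∈ S → (i+1) ∈ S → IP R (x₀, h i) (x₁, h (i+1))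

def BoundedSeq2 (R : X₁ × X₂ → X₁ × X₂ → Prop) (S : Set ℤ) (h : ℤ → X₂) (x₀ : X₁) : Prop :=
  ∃ u v : X₁ × X₂, ∀ i ∈ S, R u (x₀, h i) ∧ R (x₀, h i) v

/-- A9 : Archimedean axiom. -/
def A9 (R : X₁ × X₂ → X₁ × X₂ → Prop) : Prop :=
  (∀ z ∈ NWreg R, ∀ (S : Set ℤ) (g : ℤ → X₁) (y₀ y₁ : X₂),
    StdSeq1 R S g y₀ y₁ → BoundedSeq1 R S g y₀ →
    (∀ i ∈ S, (g i, y₀) ∈ NWz R z ∧ (g i, y₁) ∈ NWz R z) → S.Finite) ∧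
  (∀ z ∈ SEreg R, ∀ (S : Set ℤ) (g : ℤ → X₁) (y₀ y₁ : X₂),
    StdSeq1 R S g y₀ y₁ → BoundedSeq1 R S g y₀ →
    (∀ i ∈ S, (g i, y₀) ∈ SEz R z ∧ (g i, y₁) ∈ SEz R z) → S.Finite) ∧
  (∀ z ∈ NWreg R, ∀ (S : Set ℤ) (h : ℤ → X₂) (x₀ x₁ : X₁),
    StdSeq2 R S h x₀ x₁ → BoundedSeq2 R S h x₀ →
    (∀ i ∈ S, (x₀, h i) ∈ NWz R z ∧ (x₁, h i) ∈ NWz R z) → S.Finite) ∧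
  (∀ z ∈ SEreg R, ∀ (S : Set ℤ) (h : ℤ → X₂) (x₀ x₁ : X₁),
    StdSeq2 R S h x₀ x₁ → BoundedSeq2 R S h x₀ →
    (∀ i ∈ S, (x₀, h i) ∈ SEz R z ∧ (x₁, h i) ∈ SEz R z) → S.Finite)

/-- Structural assumption. -/
def Structural (R : X₁ × X₂ → X₁ × X₂ → Prop) : Prop :=
  (∀ a b : X₁, a ≠ b → ¬ ∀ p : X₂, IP R (a,p) (b,p)) ∧
  (∀ p q : X₂, p ≠ q → ¬ ∀ a : X₁, IP R (a,p) (a,q))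

/-- Order density. -/
def OrderDense (R : X₁ × X₂ → X₁ × X₂ → Prop) : Prop :=
  ∀ x y : X₁ × X₂, SP R x y → ∃ z : X₁ × X₂, SP R x z ∧ SP R z y

/-- Closedness of SE and NW. -/
def Closedness (R : X₁ × X₂ → X₁ × X₂ → Prop) : Prop :=
  (∀ a b : X₁, ∀ p : X₂, (a,p) ∉ NWreg R → (b,p) ∉ SEreg R →
    ∃ c : X₁, (c,p) ∈ Theta R) ∧
  (∀ a : X₁, ∀ p q : X₂, (a,p) ∉ NWreg R → (a,q) ∉ SEreg R →
    ∃ r : X₂, (a,r) ∈ Theta R)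

/-- A capacity on the two-element set (coordinate 1 ↦ `0`, coordinate 2 ↦ `1`). -/
structure Capacity where
  ν : Set (Fin 2) → ℝ
  empty' : ν ∅ = 0
  mono' : ∀ A B : Set (Fin 2), A ⊆ B → ν A ≤ ν B
  norm' : ν Set.univ = 1

/-- Two-point Choquet integral. -/
noncomputable def Choq (c : Capacity) (t₁ t₂ : ℝ) : ℝ :=
  if t₂ ≤ t₁ then c.ν {0} * t₁ + (1 - c.ν {0}) * t₂
  else (1 - c.ν {1}) * t₁ + c.ν {1} * t₂

/-- `ν` together with `(f₁, f₂)` represents `R`. -/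
def Represents (c : Capacity) (f₁ : X₁ → ℝ) (f₂ : X₂ → ℝ)
    (R : X₁ × X₂ → X₁ × X₂ → Prop) : Prop :=
  ∀ x y : X₁ × X₂, R x y ↔ Choq c (f₁ y.1) (f₂ y.2) ≤ Choq c (f₁ x.1) (f₂ x.2)

/-- `(V₁, V₂)` additively represents `R` on `A`. -/
def AddRep (R : X₁ × X₂ → X₁ × X₂ → Prop) (V₁ : X₁ → ℝ) (V₂ : X₂ → ℝ)
    (A : Set (X₁ × X₂)) : Prop :=
  ∀ x ∈ A, ∀ y ∈ A, (R x y ↔ V₁ y.1 + V₂ y.2 ≤ V₁ x.1 + V₂ x.2)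

/-- `Φ` represents `R` on `A`. -/
def RepOn (R : X₁ × X₂ → X₁ × X₂ → Prop) (Φ : X₁ × X₂ → ℝ) (A : Set (X₁ × X₂)) : Prop :=
  ∀ x ∈ A, ∀ y ∈ A, (R x y ↔ Φ y ≤ Φ x)


/-- `S` union of non-extreme SE cones. -/
def SEstar (R : X₁ × X₂ → X₁ × X₂ → Prop) : Set (X₁ × X₂) :=
  ⋃ z ∈ Theta R \ SEext R, SEz R z

/-- Union of non-extreme NW cones. -/
def NWstar (R : X₁ × X₂ → X₁ × X₂ → Prop) : Set (X₁ × X₂) :=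
  ⋃ z ∈ Theta R \ NWext R, NWz R z

/-- First coordinates appearing both in `SEstar` and `NWstar`. -/
def D1 (R : X₁ × X₂ → X₁ × X₂ → Prop) : Set X₁ :=
  {a | (∃ p : X₂, (a,p) ∈ SEstar R) ∧ (∃ q : X₂, (a,q) ∈ NWstar R)}

/-- Second coordinates appearing both in `SEstar` and `NWstar`. -/
def D2 (R : X₁ × X₂ → X₁ × X₂ → Prop) : Set X₂ :=
  {p | (∃ a : X₁, (a,p) ∈ SEstar R) ∧ (∃ b : X₁, (b,p) ∈ NWstar R)}

end ChoquetAxioms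

/-!
Take `x ∈ SE(z)` and `y ∈ SE(w)`. Since `≽₁` and `≽₂` are total preorders, unless one cone
contains both points, a corner of the rectangle spanned by `z` and `w` lies in both cones and
between `x` and `y` for `≽`; comparing `x` and `y` through that corner uses each cone's
representation once, and the two agree.
-/

section Gluing

variable {X₁ X₂ : Type*} {R : X₁ × X₂ → X₁ × X₂ → Prop} {Φ : X₁ × X₂ → ℝ}
  {A B : Set (X₁ × X₂)} {x y m : X₁ × X₂}

theorem RepOn.iff_of_between (htrans : ∀ x y z, R x y → R y z → R x z)
    (hA : RepOn R Φ A) (hB : RepOn R Φ B) (hx : x ∈ A) (hy : y ∈ B)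
    (hmA : m ∈ A) (hmB : m ∈ B) (hm : (R m x ∧ R y m) ∨ (R x m ∧ R m y)) :
    R x y ↔ Φ y ≤ Φ x := by
  rcases hm with ⟨hmx, hym⟩ | ⟨hxm, hmy⟩
  · have hΦxm : Φ x ≤ Φ m := (hA m hmA x hx).mp hmx
    have hΦmy : Φ m ≤ Φ y := (hB y hy m hmB).mp hym
    constructor
    · intro hxy
      calc Φ y ≤ Φ m := (hB m hmB y hy).mp (htrans _ _ _ hmx hxy)
        _ ≤ Φ x := (hA x hx m hmA).mp (htrans _ _ _ hxy hym)
    · intro hΦyx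
      exact htrans _ _ _ ((hA x hx m hmA).mpr (hΦmy.trans hΦyx))
        ((hB m hmB y hy).mpr (hΦyx.trans hΦxm))
  · refine ⟨fun _ => ?_, fun _ => htrans _ _ _ hxm hmy⟩
    calc Φ y ≤ Φ m := (hB m hmB y hy).mp hmy
      _ ≤ Φ x := (hA x hx m hmA).mp hxm

theorem RepOn.biUnion {ι : Type*} (htrans : ∀ x y z, R x y → R y z → R x z)
    {S : Set ι} {C : ι → Set (X₁ × X₂)} (hrep : ∀ i ∈ S, RepOn R Φ (C i))
    (hlink : ∀ i j, ∀ x ∈ C i, ∀ y ∈ C j, x ∉ C j → y ∉ C i →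
      ∃ m ∈ C i ∩ C j, (R m x ∧ R y m) ∨ (R x m ∧ R m y)) :
    RepOn R Φ (⋃ i ∈ S, C i) := by
  intro x hx y hy
  simp only [mem_iUnion, exists_prop] at hx hy
  obtain ⟨i, hi, hxi⟩ := hx
  obtain ⟨j, hj, hyj⟩ := hy
  by_cases hxj : x ∈ C j
  · exact hrep j hj x hxj y hyj
  by_cases hyi : y ∈ C i
  · exact hrep i hi x hxi y hyi
  obtain ⟨m, ⟨hmi, hmj⟩, hm⟩ := hlink i j x hxi y hyj hxj hyi
  exact (hrep i hi).iff_of_between htrans (hrep j hj) hxi hyj hmi hmj hm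

end Gluing

section Cones

variable {X₁ X₂ : Type*} {R : X₁ × X₂ → X₁ × X₂ → Prop}

theorem Ge1.refl (h1 : A1 R) (a : X₁) : Ge1 R a a :=
  fun p => (h1.1 (a, p) (a, p)).elim id id

theorem Ge2.refl (h1 : A1 R) (p : X₂) : Ge2 R p p :=
  fun a => (h1.1 (a, p) (a, p)).elim id id

theorem Ge1.trans (h1 : A1 R) {a b c : X₁} (hab : Ge1 R a b) (hbc : Ge1 R b c) :
    Ge1 R a c :=
  fun p => h1.2 _ _ _ (hab p) (hbc p)

theorem Ge2.trans (h1 : A1 R) {p q r : X₂} (hpq : Ge2 R p q) (hqr : Ge2 R q r) :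
    Ge2 R p r :=
  fun a => h1.2 _ _ _ (hpq a) (hqr a)

theorem Ge1.of_not (h1 : A1 R) (h2 : A2 R) {a b : X₁} (h : ¬ Ge1 R a b) : Ge1 R b a := by
  obtain ⟨p, hp⟩ := not_forall.mp h
  exact h2.1 b a p ⟨(h1.1 (b, p) (a, p)).resolve_right hp, hp⟩

theorem Ge2.of_not (h1 : A1 R) (h2 : A2 R) {p q : X₂} (h : ¬ Ge2 R p q) : Ge2 R q p := by
  obtain ⟨a, ha⟩ := not_forall.mp h
  exact h2.2 q p a ⟨(h1.1 (a, q) (a, p)).resolve_right ha, ha⟩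

theorem rel_of_ge1_of_ge2 (h1 : A1 R) {a b : X₁} {p q : X₂} (hab : Ge1 R a b)
    (hpq : Ge2 R p q) : R (a, p) (b, q) :=
  h1.2 _ _ _ (hab p) (hpq b)

/-- The witness is one of the corners `(w₁, z₂)`, `(z₁, w₂)`. -/
theorem exists_between_of_mem_SEz (h1 : A1 R) (h2 : A2 R) {z w x y : X₁ × X₂}
    (hx : x ∈ SEz R z) (hy : y ∈ SEz R w) (hxw : x ∉ SEz R w) (hyz : y ∉ SEz R z) :
    ∃ m ∈ SEz R z ∩ SEz R w, (R m x ∧ R y m) ∨ (R x m ∧ R m y) := by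
  obtain ⟨hx1, hx2⟩ := hx
  obtain ⟨hy1, hy2⟩ := hy
  simp only [SEz, mem_ofPred_eq, not_and_or] at hxw hyz
  rcases hxw with hxw | hxw <;> rcases hyz with hyz | hyz
  · exact absurd (hx1.trans h1 ((Ge1.of_not h1 h2 hyz).trans h1 hy1)) hxw
  · have hwx : Ge1 R w.1 x.1 := Ge1.of_not h1 h2 hxw
    have hyz : Ge2 R y.2 z.2 := Ge2.of_not h1 h2 hyz
    refine ⟨(w.1, z.2), ⟨⟨hwx.trans h1 hx1, Ge2.refl h1 z.2⟩,
      ⟨Ge1.refl h1 w.1, hy2.trans h1 hyz⟩⟩, Or.inl ⟨?_, ?_⟩⟩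
    · exact rel_of_ge1_of_ge2 h1 hwx hx2
    · exact rel_of_ge1_of_ge2 h1 hy1 hyz
  · have hxw : Ge2 R x.2 w.2 := Ge2.of_not h1 h2 hxw
    have hzy : Ge1 R z.1 y.1 := Ge1.of_not h1 h2 hyz
    refine ⟨(z.1, w.2), ⟨⟨Ge1.refl h1 z.1, hx2.trans h1 hxw⟩,
      ⟨hzy.trans h1 hy1, Ge2.refl h1 w.2⟩⟩, Or.inr ⟨?_, ?_⟩⟩
    · exact rel_of_ge1_of_ge2 h1 hx1 hxw
    · exact rel_of_ge1_of_ge2 h1 hzy hy2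
  · exact absurd (hx2.trans h1 ((Ge2.of_not h1 h2 hxw).trans h1 hy2)) hyz

end Cones

theorem additive_rep_global_on_SE_general {X₁ X₂ : Type*}
    (R : X₁ × X₂ → X₁ × X₂ → Prop)
    (h1 : A1 R) (h2 : A2 R)
    (V₁ : X₁ → ℝ) (V₂ : X₂ → ℝ)
    (hrep : ∀ z ∈ Theta R \ SEext R, AddRep R V₁ V₂ (SEz R z)) :
    AddRep R V₁ V₂ (⋃ z ∈ Theta R \ SEext R, SEz R z) :=
  RepOn.biUnion h1.2 hrep fun _ _ _ hx _ hy => exists_between_of_mem_SEz h1 h2 hx hy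

/-- A pair of value functions representing `R` on each non-extreme SE cone represents `R`
globally on the union of these cones. -/
theorem additive_rep_global_on_SE {X₁ X₂ : Type*} [Nonempty X₁] [Nonempty X₂]
    (R : X₁ × X₂ → X₁ × X₂ → Prop)
    (h1 : A1 R) (h2 : A2 R) (h3 : A3 R) (hclosed : Closedness R)
    (V₁ : X₁ → ℝ) (V₂ : X₂ → ℝ)
    (hrep : ∀ z ∈ Theta R \ SEext R, AddRep R V₁ V₂ (SEz R z)) :
    AddRep R V₁ V₂ (⋃ z ∈ Theta R \ SEext R, SEz R z) :=
  additive_rep_global_on_SE_general R h1 h2 V₁ V₂ hrep
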